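/- Let N_r be a rooted binary phylogenetic level-1 network on a finite nonempty set X such that each cycle of N_r has length three, and suppose that N_r has exactly k reticulations. Then every reticulation and every tree vertex of N_r is a vertex of a cycle if and only if k = |X| - 1. -/

import Mathlib

namespace Phylo

/-- A rooted directed multigraph (edges as a multiset of ordered pairs) with a
designated root, with vertices drawn from `ℕ`. -/
structure RootedNet where
  verts : Finset ℕ
  edges : Multiset (ℕ × ℕ)
  root : ℕ

namespace RootedNet

/-- In-degree of a vertex. -/
def inDeg (N : RootedNet) (v : ℕ) : ℕ := (N.edges.filter (fun e => e.2 = v)).card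

/-- Out-degree of a vertex. -/
def outDeg (N : RootedNet) (v : ℕ) : ℕ := (N.edges.filter (fun e => e.1 = v)).card

/-- A reticulation of a rooted network: a vertex of in-degree two. -/
def IsRet (N : RootedNet) (v : ℕ) : Prop := v ∈ N.verts ∧ N.inDeg v = 2

/-- A tree vertex of a rooted network: in-degree one and out-degree two. -/
def IsTreeVert (N : RootedNet) (v : ℕ) : Prop :=
  v ∈ N.verts ∧ N.inDeg v = 1 ∧ N.outDeg v = 2

/-- The number of reticulations. -/
def numRet (N : RootedNet) : ℕ := (N.verts.filter (fun v => N.inDeg v = 2)).card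

/-- The number of tree vertices. -/
def numTreeVert (N : RootedNet) : ℕ :=
  (N.verts.filter (fun v => N.inDeg v = 1 ∧ N.outDeg v = 2)).card

/-- `N` is a rooted binary phylogenetic network on leaf set `X`:
a rooted acyclic digraph without loops in which the root has in-degree 0 and
out-degree 1, the out-degree-0 vertices are exactly `X` and have in-degree 1,
and every other non-root vertex is a tree vertex or a reticulation. -/
def IsPhylo (X : Finset ℕ) (N : RootedNet) : Prop :=
  X.Nonempty ∧ X ⊆ N.verts ∧
  (∀ e ∈ N.edges, e.1 ∈ N.verts ∧ e.2 ∈ N.verts) ∧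
  (∀ v : ℕ, ¬ Relation.TransGen (fun a b => (a, b) ∈ N.edges) v v) ∧
  N.root ∈ N.verts ∧ N.inDeg N.root = 0 ∧ N.outDeg N.root = 1 ∧
  (∀ v ∈ N.verts, (v ∈ X ↔ N.outDeg v = 0)) ∧
  (∀ v ∈ N.verts, N.outDeg v = 0 → N.inDeg v = 1) ∧
  (∀ v ∈ N.verts, v ≠ N.root → N.outDeg v ≠ 0 →
    (N.inDeg v = 1 ∧ N.outDeg v = 2) ∨ (N.inDeg v = 2 ∧ N.outDeg v = 1))

/-- The underlying undirected edge multiset of a rooted network. -/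
def underlying (N : RootedNet) : Multiset (Sym2 ℕ) :=
  N.edges.map (fun e => s(e.1, e.2))

end RootedNet

/-- The multiset of (undirected) edges traversed by the closed walk through the
vertices of the list `c` (in cyclic order). -/
def cycleEdges (c : List ℕ) : Multiset (Sym2 ℕ) :=
  ↑(List.zipWith (fun a b => s(a, b)) c (c.rotate 1))

/-- The list `c` of distinct vertices is a cycle in the undirected multigraph
with edge multiset `E` (with multiplicities: a cycle of length 2 needs a pair of
parallel edges; a cycle of length 1 is a loop). -/
def IsCycleIn (E : Multiset (Sym2 ℕ)) (c : List ℕ) : Prop :=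
  c ≠ [] ∧ c.Nodup ∧ cycleEdges c ≤ E

/-- Level-1: each cycle has length at least three and no two (distinct) cycles
share a vertex. -/
def Level1 (E : Multiset (Sym2 ℕ)) : Prop :=
  (∀ c : List ℕ, IsCycleIn E c → 3 ≤ c.length) ∧
  (∀ c₁ c₂ : List ℕ, IsCycleIn E c₁ → IsCycleIn E c₂ →
    cycleEdges c₁ ≠ cycleEdges c₂ → ∀ v, v ∈ c₁ → v ∉ c₂)

/-- Almost level-1: at most one cycle of length two, all other cycles have
length at least three, and no two (distinct) cycles share a vertex. -/
def AlmostLevel1 (E : Multiset (Sym2 ℕ)) : Prop :=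
  (∀ c : List ℕ, IsCycleIn E c → 2 ≤ c.length) ∧
  (∀ c₁ c₂ : List ℕ, IsCycleIn E c₁ → IsCycleIn E c₂ → c₁.length = 2 →
    c₂.length = 2 → cycleEdges c₁ = cycleEdges c₂) ∧
  (∀ c₁ c₂ : List ℕ, IsCycleIn E c₁ → IsCycleIn E c₂ →
    cycleEdges c₁ ≠ cycleEdges c₂ → ∀ v, v ∈ c₁ → v ∉ c₂)

/-- Reachability in the undirected multigraph with edge multiset `E`. -/
def Reaches (E : Multiset (Sym2 ℕ)) (u v : ℕ) : Prop :=
  Relation.ReflTransGen (fun a b => s(a, b) ∈ E) u v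

/-- The graph on vertex set `V` with undirected edge multiset `E` has exactly
two connected components. -/
def TwoComponents (V : Finset ℕ) (E : Multiset (Sym2 ℕ)) : Prop :=
  ∃ A B : Finset ℕ, A.Nonempty ∧ B.Nonempty ∧ A ∪ B = V ∧ Disjoint A B ∧
    (∀ u ∈ A, ∀ v ∈ A, Reaches E u v) ∧
    (∀ u ∈ B, ∀ v ∈ B, Reaches E u v) ∧
    (∀ u ∈ A, ∀ v ∈ B, ¬ Reaches E u v)

/-- `e` is a cut edge: deleting (one copy of) it leaves exactly two connected
components. -/
def IsCutEdgeU (V : Finset ℕ) (E : Multiset (Sym2 ℕ)) (e : Sym2 ℕ) : Prop :=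
  e ∈ E ∧ TwoComponents V (E.erase e)

/-- A cut edge of a rooted network. -/
def RootedNet.IsCutEdge (N : RootedNet) (e : ℕ × ℕ) : Prop :=
  e ∈ N.edges ∧ TwoComponents N.verts (N.underlying.erase s(e.1, e.2))

/-- Isomorphism of rooted networks fixing each leaf in `X`. -/
def RootedNet.Iso (X : Finset ℕ) (N N' : RootedNet) : Prop :=
  ∃ ψ : ℕ → ℕ, Set.BijOn ψ (N.verts : Set ℕ) (N'.verts : Set ℕ) ∧
    (∀ x ∈ X, ψ x = x) ∧
    N'.edges = N.edges.map (fun e => (ψ e.1, ψ e.2))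

/-- Cut edge transfer (CET) on rooted binary phylogenetic networks on `X`:
delete the cut edge `(u,v)` (not incident with the root, `u` not a
reticulation), suppress `u`, subdivide an edge `(a,b)` of the root component
with a fresh vertex `u'` and add the edge `(u',v)`; the result must not be
isomorphic to the original network. -/
def RootedNet.CET (X : Finset ℕ) (N N' : RootedNet) : Prop :=
  N.IsPhylo X ∧ N'.IsPhylo X ∧ ¬ RootedNet.Iso X N N' ∧
  ∃ u v p c a b u' : ℕ, ∃ M : RootedNet,
    N.IsCutEdge (u, v) ∧ u ≠ N.root ∧ v ≠ N.root ∧ ¬ N.IsRet u ∧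
    N.edges.filter (fun e => e.2 = u) = {(p, u)} ∧
    N.edges.filter (fun e => e.1 = u) = {(u, v), (u, c)} ∧
    M.verts = N.verts.erase u ∧
    M.edges = (p, c) ::ₘ (((N.edges.erase (u, v)).erase (p, u)).erase (u, c)) ∧
    M.root = N.root ∧
    (a, b) ∈ M.edges ∧ Reaches M.underlying N.root a ∧
    u' ∉ M.verts ∧
    N'.verts = insert u' M.verts ∧
    N'.edges = (a, u') ::ₘ (u', b) ::ₘ (u', v) ::ₘ (M.edges.erase (a, b)) ∧
    N'.root = N.root

/-- A mixed multigraph: directed (reticulation) edges and undirected edges. -/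
structure MixedNet where
  verts : Finset ℕ
  dedges : Multiset (ℕ × ℕ)
  uedges : Multiset (Sym2 ℕ)

namespace MixedNet

/-- The underlying undirected edge multiset of a mixed network. -/
def underlying (N : MixedNet) : Multiset (Sym2 ℕ) :=
  N.uedges + N.dedges.map (fun e => s(e.1, e.2))

/-- Directed in-degree. -/
def dInDeg (N : MixedNet) (v : ℕ) : ℕ := (N.dedges.filter (fun e => e.2 = v)).card

/-- A reticulation of a semi-directed network: two edges directed into `v`, or
a loop at `v`. -/
def IsRet (N : MixedNet) (v : ℕ) : Prop :=
  v ∈ N.verts ∧ (N.dInDeg v = 2 ∨ (v, v) ∈ N.dedges)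

/-- The number of reticulations of a semi-directed network. -/
def numRet (N : MixedNet) : ℕ :=
  (N.verts.filter (fun v => N.dInDeg v = 2 ∨ (v, v) ∈ N.dedges)).card

/-- Isomorphism of mixed networks fixing each leaf in `X`. -/
def Iso (X : Finset ℕ) (N N' : MixedNet) : Prop :=
  ∃ ψ : ℕ → ℕ, Set.BijOn ψ (N.verts : Set ℕ) (N'.verts : Set ℕ) ∧
    (∀ x ∈ X, ψ x = x) ∧
    N'.dedges = N.dedges.map (fun e => (ψ e.1, ψ e.2)) ∧
    N'.uedges = N.uedges.map (Sym2.map ψ)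

end MixedNet

/-- Edges of `Nr` surviving the passage to the semi-directed network:
those not incident with the root or with the child `t` of the root. -/
def semiKeep (Nr : RootedNet) (t : ℕ) : Multiset (ℕ × ℕ) :=
  Nr.edges.filter (fun e => ¬(e.1 = Nr.root) ∧ ¬(e.1 = t) ∧ ¬(e.2 = t))

/-- Surviving edges that stay directed (those into a reticulation). -/
def semiKeepD (Nr : RootedNet) (t : ℕ) : Multiset (ℕ × ℕ) :=
  (semiKeep Nr t).filter (fun e => Nr.inDeg e.2 = 2)

/-- Surviving edges that become undirected (tree edges). -/
def semiKeepU (Nr : RootedNet) (t : ℕ) : Multiset (Sym2 ℕ) :=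
  ((semiKeep Nr t).filter (fun e => ¬ Nr.inDeg e.2 = 2)).map (fun e => s(e.1, e.2))

/-- `Ns` is the mixed graph obtained from the rooted network `Nr` by deleting
the root, suppressing the resulting in-degree-0 out-degree-2 vertex `t`, and
undirecting all tree edges. If the two out-edges of `t` are parallel, a
directed loop is created; the edge created by suppressing `t` is directed
towards a reticulation endpoint, and undirected otherwise. -/
def SemiDirectedFrom (Nr : RootedNet) (Ns : MixedNet) : Prop :=
  ∃ t w₁ w₂ : ℕ,
    (Nr.root, t) ∈ Nr.edges ∧
    Nr.edges.filter (fun e => e.1 = t) = {(t, w₁), (t, w₂)} ∧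
    Ns.verts = (Nr.verts.erase Nr.root).erase t ∧
    ((w₁ = w₂ ∧ Ns.dedges = (w₁, w₁) ::ₘ semiKeepD Nr t ∧
        Ns.uedges = semiKeepU Nr t) ∨
     (w₁ ≠ w₂ ∧ Nr.inDeg w₁ = 2 ∧ Ns.dedges = (w₂, w₁) ::ₘ semiKeepD Nr t ∧
        Ns.uedges = semiKeepU Nr t) ∨
     (w₁ ≠ w₂ ∧ ¬ Nr.inDeg w₁ = 2 ∧ Nr.inDeg w₂ = 2 ∧
        Ns.dedges = (w₁, w₂) ::ₘ semiKeepD Nr t ∧ Ns.uedges = semiKeepU Nr t) ∨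
     (¬ Nr.inDeg w₁ = 2 ∧ ¬ Nr.inDeg w₂ = 2 ∧ Ns.dedges = semiKeepD Nr t ∧
        Ns.uedges = s(w₁, w₂) ::ₘ semiKeepU Nr t))

/-- `Nr` is a rooted partner of the semi-directed network `Ns` on `X`. -/
def IsRootedPartner (X : Finset ℕ) (Nr : RootedNet) (Ns : MixedNet) : Prop :=
  Nr.IsPhylo X ∧ SemiDirectedFrom Nr Ns

/-- `Ns` is a semi-directed binary phylogenetic network on `X`. -/
def IsSemiDirected (X : Finset ℕ) (Ns : MixedNet) : Prop :=
  ∃ Nr : RootedNet, IsRootedPartner X Nr Ns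

/-- `Ns` is a semi-directed level-1 network on `X`: it has a level-1 rooted
partner. -/
def IsSemiLevel1 (X : Finset ℕ) (Ns : MixedNet) : Prop :=
  ∃ Nr : RootedNet, IsRootedPartner X Nr Ns ∧ Level1 Nr.underlying

/-- `Ns` is a semi-directed almost level-1 network on `X`: it has an almost
level-1 rooted partner. -/
def IsSemiAlmostLevel1 (X : Finset ℕ) (Ns : MixedNet) : Prop :=
  ∃ Nr : RootedNet, IsRootedPartner X Nr Ns ∧ AlmostLevel1 Nr.underlying

/-- Delete the undirected edge `{u,v}` from `N`, giving `M`. -/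
def DeleteUEdge (N : MixedNet) (u v : ℕ) (M : MixedNet) : Prop :=
  M.verts = N.verts ∧ N.uedges = s(u, v) ::ₘ M.uedges ∧ M.dedges = N.dedges

/-- Suppress the degree-two vertex `w` of `N` whose two incident edges lead to
`a` and `b`, giving `M`. The merged edge is directed into a reticulation
endpoint (in particular two parallel directed donor edges merge to a loop when
`a = b`) and undirected otherwise. -/
def SuppressVertexAt (N : MixedNet) (w a b : ℕ) (M : MixedNet) : Prop :=
  M.verts = N.verts.erase w ∧
  (∀ g ∈ M.uedges, ¬ w ∈ g) ∧ (∀ g ∈ M.dedges, g.1 ≠ w ∧ g.2 ≠ w) ∧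
  ((∃ U₀, N.uedges = s(w, a) ::ₘ s(w, b) ::ₘ U₀ ∧ M.uedges = s(a, b) ::ₘ U₀ ∧
      M.dedges = N.dedges) ∨
   (∃ U₀ D₀, N.uedges = s(w, a) ::ₘ U₀ ∧ N.dedges = (w, b) ::ₘ D₀ ∧
      M.uedges = U₀ ∧ M.dedges = (a, b) ::ₘ D₀) ∨
   (∃ U₀ D₀, N.uedges = U₀ ∧ N.dedges = (w, a) ::ₘ (w, b) ::ₘ D₀ ∧
      M.uedges = U₀ ∧ (M.dedges = (a, b) ::ₘ D₀ ∨ M.dedges = (b, a) ::ₘ D₀)))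

/-- Subdivide the recipient edge (with underlying edge `f`, lying in the
connected component of `M` not containing `v`) with a fresh vertex `u'` and add
the new cut edge `{u',v}`, giving `N'`. Subdividing a loop `(w,w)` produces two
parallel edges directed into `w`. -/
def SubdivideAttach (M : MixedNet) (u' v : ℕ) (f : Sym2 ℕ) (N' : MixedNet) : Prop :=
  u' ∉ M.verts ∧ N'.verts = insert u' M.verts ∧
  (∃ a, a ∈ f ∧ ¬ Reaches M.underlying v a) ∧
  ((∃ a b U₀, f = s(a, b) ∧ M.uedges = s(a, b) ::ₘ U₀ ∧
      N'.uedges = s(a, u') ::ₘ s(u', b) ::ₘ s(u', v) ::ₘ U₀ ∧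
      N'.dedges = M.dedges) ∨
   (∃ a b D₀, f = s(a, b) ∧ a ≠ b ∧ M.dedges = (a, b) ::ₘ D₀ ∧
      N'.dedges = (u', b) ::ₘ D₀ ∧
      N'.uedges = s(a, u') ::ₘ s(u', v) ::ₘ M.uedges) ∨
   (∃ w D₀, f = s(w, w) ∧ M.dedges = (w, w) ::ₘ D₀ ∧
      N'.dedges = (u', w) ::ₘ (u', w) ::ₘ D₀ ∧
      N'.uedges = s(u', v) ::ₘ M.uedges))

/-- Witness data for a cut edge transfer (CET) on semi-directed networks on
`X`, recording the deleted cut edge `{u,v}`, the other endpoints `w₁, w₂` of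
the two donor edges at `u`, the fresh vertex `u'` and the (underlying edge of
the) recipient edge `f`. -/
def MixedNet.CETWitness (X : Finset ℕ) (N N' : MixedNet)
    (u v w₁ w₂ u' : ℕ) (f : Sym2 ℕ) : Prop :=
  IsSemiDirected X N ∧ IsSemiDirected X N' ∧ ¬ MixedNet.Iso X N N' ∧
  s(u, v) ∈ N.uedges ∧ IsCutEdgeU N.verts N.underlying s(u, v) ∧
  ¬ N.IsRet u ∧
  (∃ Nr : RootedNet, IsRootedPartner X Nr N ∧
    ((u, v) ∈ Nr.edges ∨
      ∃ t : ℕ, Nr.IsCutEdge (Nr.root, t) ∧ Nr.IsCutEdge (t, u) ∧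
        Nr.IsCutEdge (t, v))) ∧
  ∃ M₀ M : MixedNet, DeleteUEdge N u v M₀ ∧ SuppressVertexAt M₀ u w₁ w₂ M ∧
    SubdivideAttach M u' v f N'

/-- Cut edge transfer (CET) on semi-directed networks on `X`. -/
def MixedNet.CET (X : Finset ℕ) (N N' : MixedNet) : Prop :=
  ∃ u v w₁ w₂ u' : ℕ, ∃ f : Sym2 ℕ, MixedNet.CETWitness X N N' u v w₁ w₂ u' f

/-- A CET₁ is a CET whose recipient edge is incident with one of the two donor
edges. -/
def MixedNet.CET1 (X : Finset ℕ) (N N' : MixedNet) : Prop :=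
  ∃ u v w₁ w₂ u' : ℕ, ∃ f : Sym2 ℕ,
    MixedNet.CETWitness X N N' u v w₁ w₂ u' f ∧ (w₁ ∈ f ∨ w₂ ∈ f)

/-- The CET with the given witness data changes the location of a pair of
parallel edges: its two donor edges are edges of a 3-cycle and its recipient
edge is an edge of a 2-cycle. -/
def ChangesParallel (N : MixedNet) (u w₁ w₂ : ℕ) (f : Sym2 ℕ) : Prop :=
  (∃ c : List ℕ, IsCycleIn N.underlying c ∧ c.length = 3 ∧
    s(u, w₁) ∈ cycleEdges c ∧ s(u, w₂) ∈ cycleEdges c) ∧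
  (∃ c : List ℕ, IsCycleIn N.underlying c ∧ c.length = 2 ∧ f ∈ cycleEdges c)

/-- The CET with the given witness data exchanges a loop for two pairs of
parallel edges or vice versa. -/
def ExchangesLoop (N : MixedNet) (u w₁ w₂ : ℕ) (f : Sym2 ℕ) : Prop :=
  ((∃ c : List ℕ, IsCycleIn N.underlying c ∧ c.length = 3 ∧
      s(u, w₁) ∈ cycleEdges c ∧ s(u, w₂) ∈ cycleEdges c) ∧
    f.IsDiag ∧ f ∈ N.underlying) ∨
  (w₁ = w₂ ∧
    (∃ c : List ℕ, IsCycleIn N.underlying c ∧ c.length = 2 ∧ f ∈ cycleEdges c))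

/-- CET⁻: remove a reticulation. Either delete the vertex carrying a loop (and
suppress the resulting degree-two vertex), or undirect the second edge directed
into `v`, delete the reticulation edge `(u,v)` and suppress `u` and `v`. -/
def MixedNet.CETminus (X : Finset ℕ) (N N' : MixedNet) : Prop :=
  IsSemiDirected X N ∧ IsSemiDirected X N' ∧
  ((∃ u w a b : ℕ, ∃ K : MixedNet,
      (u, u) ∈ N.dedges ∧
      K.verts = N.verts.erase u ∧
      ((s(u, w) ∈ N.uedges ∧ K.uedges = N.uedges.erase s(u, w) ∧
          K.dedges = N.dedges.erase (u, u)) ∨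
       (∃ q : ℕ, ∃ D₀ : Multiset (ℕ × ℕ),
          N.dedges.erase (u, u) = (u, w) ::ₘ (q, w) ::ₘ D₀ ∧
          K.dedges = D₀ ∧ K.uedges = s(q, w) ::ₘ N.uedges)) ∧
      SuppressVertexAt K w a b N') ∨
   (∃ u v p a b a' b' : ℕ, ∃ K K' : MixedNet, ∃ D₀ : Multiset (ℕ × ℕ),
      u ≠ v ∧ ¬ N.IsRet u ∧
      N.dedges = (u, v) ::ₘ (p, v) ::ₘ D₀ ∧
      K.verts = N.verts ∧ K.dedges = D₀ ∧ K.uedges = s(p, v) ::ₘ N.uedges ∧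
      SuppressVertexAt K u a b K' ∧ SuppressVertexAt K' v a' b' N'))

/-- Subdivide an edge of `N` with the fresh vertex `v`, giving `K`.
Subdividing a directed edge `(a,b)` gives an undirected edge `{a,v}` and a
directed edge `(v,b)`; subdividing a loop `(w,w)` gives two parallel edges
directed into `w`. -/
def Subdivide (N : MixedNet) (v : ℕ) (K : MixedNet) : Prop :=
  v ∉ N.verts ∧ K.verts = insert v N.verts ∧
  ((∃ a b U₀, N.uedges = s(a, b) ::ₘ U₀ ∧
      K.uedges = s(a, v) ::ₘ s(v, b) ::ₘ U₀ ∧ K.dedges = N.dedges) ∨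
   (∃ a b D₀, N.dedges = (a, b) ::ₘ D₀ ∧ a ≠ b ∧
      K.dedges = (v, b) ::ₘ D₀ ∧ K.uedges = s(a, v) ::ₘ N.uedges) ∨
   (∃ w D₀, N.dedges = (w, w) ::ₘ D₀ ∧
      K.dedges = (v, w) ::ₘ (v, w) ::ₘ D₀ ∧ K.uedges = N.uedges))

/-- CET⁺: add a reticulation, either (i) subdivide an edge with `v`, attach a
new vertex `u` by an undirected edge and add a directed loop at `u`, or (ii)
subdivide an edge with `v`, subdivide an edge of the result with `u`, add the
directed edge `(u,v)` and direct one of the two other edges incident with `v`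
into `v` (provided the result is a semi-directed network on `X`). -/
def MixedNet.CETplus (X : Finset ℕ) (N N' : MixedNet) : Prop :=
  IsSemiDirected X N ∧ IsSemiDirected X N' ∧
  ∃ u v : ℕ, ∃ K : MixedNet, Subdivide N v K ∧ u ≠ v ∧
  ((u ∉ K.verts ∧ N'.verts = insert u K.verts ∧
      N'.uedges = s(u, v) ::ₘ K.uedges ∧ N'.dedges = (u, u) ::ₘ K.dedges) ∨
   (∃ K' : MixedNet, Subdivide K u K' ∧ N'.verts = K'.verts ∧
      ∃ w : ℕ, ∃ U₀ : Multiset (Sym2 ℕ), K'.uedges = s(w, v) ::ₘ U₀ ∧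
        N'.uedges = U₀ ∧ N'.dedges = (u, v) ::ₘ (w, v) ::ₘ K'.dedges))

/-- An extended CET: a single CET, CET⁺ or CET⁻. -/
def ExtCET (X : Finset ℕ) (N N' : MixedNet) : Prop :=
  MixedNet.CET X N N' ∨ MixedNet.CETplus X N N' ∨ MixedNet.CETminus X N N'

/-- The leaves `y 1, …, y m` form a caterpillar hanging below the vertex `v`. -/
def CatBelow (N : RootedNet) (v : ℕ) (m : ℕ) (y : ℕ → ℕ) : Prop :=
  1 ≤ m ∧
  ((m = 1 ∧ (v, y 1) ∈ N.edges) ∨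
   (2 ≤ m ∧ ∃ p : ℕ → ℕ,
      (∀ i, 1 ≤ i → i ≤ m → (p i, y i) ∈ N.edges) ∧
      p 1 = p 2 ∧
      (∀ i, 2 ≤ i → i + 1 ≤ m → (p (i + 1), p i) ∈ N.edges) ∧
      (v, p m) ∈ N.edges))

/-- `x` enumerates the `n`-element leaf set `X` as `x 1, …, x n`. -/
def IsEnum (X : Finset ℕ) (n : ℕ) (x : ℕ → ℕ) : Prop :=
  (∀ i, 1 ≤ i → i ≤ n → x i ∈ X) ∧
  (∀ a ∈ X, ∃ i, 1 ≤ i ∧ i ≤ n ∧ x i = a) ∧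
  (∀ i j, 1 ≤ i → i ≤ n → 1 ≤ j → j ≤ n → x i = x j → i = j)

/-- `N` is the rooted level-1 network on `X = {x 1, …, x n}` with exactly `k`
reticulations in standard form. -/
def InStandardForm (X : Finset ℕ) (n k : ℕ) (x : ℕ → ℕ) (N : RootedNet) : Prop :=
  N.IsPhylo X ∧ Level1 N.underlying ∧ N.numRet = k ∧ n = X.card ∧
  ((k = 0 ∧ CatBelow N N.root n x) ∨
   (1 ≤ k ∧ ∃ u v p : ℕ → ℕ,
      (∀ i, 1 ≤ i → i ≤ k →
        IsCycleIn N.underlying [u i, p i, v i] ∧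
        (u i, p i) ∈ N.edges ∧ (u i, v i) ∈ N.edges ∧ (p i, v i) ∈ N.edges ∧
        N.inDeg (v i) = 2) ∧
      (∀ c : List ℕ, IsCycleIn N.underlying c →
        ∃ i, 1 ≤ i ∧ i ≤ k ∧ cycleEdges c = cycleEdges [u i, p i, v i]) ∧
      (∀ i j, 1 ≤ i → i ≤ k → 1 ≤ j → j ≤ k →
        cycleEdges [u i, p i, v i] = cycleEdges [u j, p j, v j] → i = j) ∧
      (∀ i, 1 ≤ i → i ≤ k → (p i, x i) ∈ N.edges) ∧
      (N.root, u 1) ∈ N.edges ∧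
      (∀ i, 1 ≤ i → i + 1 ≤ k → (v i, u (i + 1)) ∈ N.edges) ∧
      CatBelow N (v k) (n - k) (fun j => x (k + j))))

/-- `N` is of standard shape: it is in standard form up to a permutation of its
leaf labels, i.e. in standard form for some enumeration of `X`. -/
def StandardShape (X : Finset ℕ) (k : ℕ) (N : RootedNet) : Prop :=
  ∃ x : ℕ → ℕ, IsEnum X X.card x ∧ InStandardForm X X.card k x N

/-- The extended CET distance within the collection of networks satisfying `P`
(measured between isomorphism classes). -/
noncomputable def extDist (X : Finset ℕ) (P : MixedNet → Prop)
    (N N' : MixedNet) : ℕ :=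
  sInf {m : ℕ | ∃ L : List MixedNet, L.Chain' (ExtCET X) ∧ L.head? = some N ∧
    (∃ M, L.getLast? = some M ∧ MixedNet.Iso X M N') ∧ (∀ K ∈ L, P K) ∧

    L.length = m + 1}
/-! ### Auxiliary material for Statement 5 -/

section Aux

open List

/-- The edges of the walk through the vertices of `L`. -/
def wE (L : List ℕ) : List (Sym2 ℕ) := List.zipWith (fun a b => s(a, b)) L L.tail

lemma wE_nil : wE [] = [] := rfl

lemma wE_single (a : ℕ) : wE [a] = [] := rfl

lemma wE_cons (a b : ℕ) (t : List ℕ) : wE (a :: b :: t) = s(a, b) :: wE (b :: t) := rfl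

lemma zipWith_append_left {α β γ : Type*} (f : α → β → γ) :
    ∀ (A B : List α) (C : List β), C.length ≤ A.length →
      List.zipWith f (A ++ B) C = List.zipWith f A C := by
  intro A
  induction A with
  | nil =>
    intro B C hC
    have : C = [] := List.length_eq_zero_iff.mp (Nat.le_zero.mp hC)
    subst this; simp
  | cons a A ih =>
    intro B C hC
    cases C with
    | nil => simp
    | cons c C =>
      simp only [List.cons_append, List.zipWith_cons_cons]
      rw [ih B C (by simpa using hC)]

lemma wE_mem {L : List ℕ} {e : Sym2 ℕ} (h : e ∈ wE L) :
    ∃ x y, e = s(x, y) ∧ x ∈ L ∧ y ∈ L := by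
  induction L with
  | nil => simp [wE_nil] at h
  | cons a t ih =>
    cases t with
    | nil => simp [wE_single] at h
    | cons b t' =>
      rw [wE_cons] at h
      rcases List.mem_cons.mp h with h | h
      · exact ⟨a, b, h, by simp, by simp⟩
      · obtain ⟨x, y, hxy, hx, hy⟩ := ih h
        exact ⟨x, y, hxy, List.mem_cons_of_mem _ hx, List.mem_cons_of_mem _ hy⟩

lemma wE_nodup {L : List ℕ} (h : L.Nodup) : (wE L).Nodup := by
  induction L with
  | nil => simp [wE_nil]
  | cons a t ih =>
    cases t with
    | nil => simp [wE_single]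
    | cons b t' =>
      rw [wE_cons]
      refine List.nodup_cons.mpr ⟨?_, ih (List.Nodup.of_cons h)⟩
      intro hmem
      obtain ⟨x, y, hxy, hx, hy⟩ := wE_mem hmem
      have ha : a ∈ b :: t' := by
        rcases Sym2.eq_iff.mp hxy with ⟨h1, h2⟩ | ⟨h1, h2⟩
        · exact h1 ▸ hx
        · exact h1 ▸ hy
      exact (List.nodup_cons.mp h).1 ha

lemma wE_concat (v : ℕ) : ∀ (L : List ℕ) (hL : L ≠ []),
    wE (L ++ [v]) = wE L ++ [s(L.getLast hL, v)] := by
  intro L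
  induction L with
  | nil => intro hL; exact absurd rfl hL
  | cons a t ih =>
    intro hL
    cases t with
    | nil => rfl
    | cons b t' =>
      have h' := ih (by simp)
      have hshape : (a :: b :: t') ++ [v] = a :: b :: (t' ++ [v]) := rfl
      rw [hshape, wE_cons, show b :: (t' ++ [v]) = (b :: t') ++ [v] from rfl, h', wE_cons]
      simp [List.getLast_cons]

lemma wE_subset_of_chain {E : Multiset (Sym2 ℕ)} :
    ∀ {L : List ℕ}, L.Chain' (fun x y => s(x, y) ∈ E) → ∀ e ∈ wE L, e ∈ E := by
  intro L
  induction L with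
  | nil => intro _ e he; simp [wE_nil] at he
  | cons a t ih =>
    intro hch e he
    cases t with
    | nil => simp [wE_single] at he
    | cons b t' =>
      rw [wE_cons] at he
      rcases List.isChain_cons_cons.mp hch with ⟨hab, hch'⟩
      rcases List.mem_cons.mp he with rfl | he
      · exact hab
      · exact ih hch' e he

lemma cycleEdges_cons (v : ℕ) (M : List ℕ) (hM : M ≠ []) :
    cycleEdges (v :: M) = ↑(s(v, M.head hM) :: wE (M ++ [v])) := by
  cases M with
  | nil => exact absurd rfl hM
  | cons m M' =>
    show (↑(List.zipWith (fun a b => s(a, b)) (v :: m :: M') ((v :: m :: M').rotate 1)) :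
        Multiset (Sym2 ℕ)) = _
    congr 1
    rw [show (1 : ℕ) = 0 + 1 from rfl, List.rotate_cons_succ, List.rotate_zero]
    show List.zipWith (fun a b => s(a, b)) (v :: m :: M') (m :: (M' ++ [v])) = _
    rw [List.zipWith_cons_cons]
    congr 1
    exact (zipWith_append_left _ (m :: M') [v] (M' ++ [v]) (by simp)).symm

lemma head_ne_getLast {M : List ℕ} (hM : M ≠ []) (h2 : 2 ≤ M.length) (hnd : M.Nodup) :
    M.head hM ≠ M.getLast hM := by
  cases M with
  | nil => exact absurd rfl hM
  | cons m M' =>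
    cases M' with
    | nil => simp at h2
    | cons b t =>
      intro h
      have : (m :: b :: t).getLast (by simp) = (b :: t).getLast (by simp) :=
        List.getLast_cons (by simp)
      rw [List.head_cons, this] at h
      exact (List.nodup_cons.mp hnd).1 (h ▸ List.getLast_mem (l := b :: t) (by simp))

lemma list_coe_le_of_nodup {E : Multiset (Sym2 ℕ)} {L : List (Sym2 ℕ)} (hnd : L.Nodup)
    (hsub : ∀ e ∈ L, e ∈ E) : (↑L : Multiset (Sym2 ℕ)) ≤ E := by
  refine (Multiset.le_iff_subset ?_).mpr ?_
  · exact Multiset.coe_nodup.mpr hnd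
  · intro e he
    exact hsub e (Multiset.mem_coe.mp he)

/-- The master cycle-builder. -/
lemma isCycleIn_cons {E : Multiset (Sym2 ℕ)} (v : ℕ) (M : List ℕ) (hM : M ≠ [])
    (hlen : 2 ≤ M.length) (hnd : M.Nodup) (hv : v ∉ M)
    (hch : M.Chain' (fun x y => s(x, y) ∈ E))
    (h1 : s(v, M.head hM) ∈ E) (h2 : s(M.getLast hM, v) ∈ E) :
    IsCycleIn E (v :: M) ∧ s(v, M.head hM) ∈ cycleEdges (v :: M) ∧
      s(M.getLast hM, v) ∈ cycleEdges (v :: M) := by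
  have hce : cycleEdges (v :: M) = ↑(s(v, M.head hM) :: (wE M ++ [s(M.getLast hM, v)])) := by
    rw [cycleEdges_cons v M hM, wE_concat v M hM]
  have hndE : (s(v, M.head hM) :: (wE M ++ [s(M.getLast hM, v)])).Nodup := by
    refine List.nodup_cons.mpr ⟨?_, ?_⟩
    · intro hmem
      rcases List.mem_append.mp hmem with hmem | hmem
      · obtain ⟨x, y, hxy, hx, hy⟩ := wE_mem hmem
        rcases Sym2.eq_iff.mp hxy with ⟨hA, hB⟩ | ⟨hA, hB⟩
        · exact hv (hA ▸ hx)
        · exact hv (hA ▸ hy)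
      · rcases List.mem_singleton.mp hmem with h
        rcases Sym2.eq_iff.mp h with ⟨hA, hB⟩ | ⟨hA, hB⟩
        · exact hv (hA ▸ List.getLast_mem hM)
        · exact head_ne_getLast hM hlen hnd hB
    · refine List.Nodup.append (wE_nodup hnd) (List.nodup_singleton _) ?_
      intro e heW heS
      rcases List.mem_singleton.mp heS with h
      obtain ⟨x, y, hxy, hx, hy⟩ := wE_mem heW
      rw [h] at hxy
      rcases Sym2.eq_iff.mp hxy with ⟨hA, hB⟩ | ⟨hA, hB⟩
      · exact hv (hB ▸ hy)
      · exact hv (hB ▸ hx)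
  have hsubE : ∀ e ∈ s(v, M.head hM) :: (wE M ++ [s(M.getLast hM, v)]), e ∈ E := by
    intro e he
    rcases List.mem_cons.mp he with rfl | he
    · exact h1
    rcases List.mem_append.mp he with he | he
    · exact wE_subset_of_chain hch e he
    · rw [List.mem_singleton.mp he]; exact h2
  refine ⟨⟨by simp, List.nodup_cons.mpr ⟨hv, hnd⟩, ?_⟩, ?_, ?_⟩
  · rw [hce]; exact list_coe_le_of_nodup hndE hsubE
  · rw [hce]; exact Multiset.mem_coe.mpr (by simp)
  · rw [hce]; exact Multiset.mem_coe.mpr (by simp)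

lemma cycleEdges_pair (x y : ℕ) : cycleEdges [x, y] = ↑[s(x, y), s(y, x)] := by
  show (↑(List.zipWith (fun a b => s(a, b)) [x, y] ([x, y].rotate 1)) : Multiset (Sym2 ℕ)) = _
  rw [show (1 : ℕ) = 0 + 1 from rfl, List.rotate_cons_succ, List.rotate_zero]
  rfl

lemma cycleEdges_triple (x y z : ℕ) :
    cycleEdges [x, y, z] = ↑[s(x, y), s(y, z), s(z, x)] := by
  show (↑(List.zipWith (fun a b => s(a, b)) [x, y, z] ([x, y, z].rotate 1)) :
    Multiset (Sym2 ℕ)) = _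
  rw [show (1 : ℕ) = 0 + 1 from rfl, List.rotate_cons_succ, List.rotate_zero]
  rfl

lemma chain_transGen {r : ℕ → ℕ → Prop} :
    ∀ {L : List ℕ} {a : ℕ}, List.Chain r a L → ∀ b ∈ L, Relation.TransGen r a b := by
  intro L
  induction L with
  | nil => simp
  | cons c t ih =>
    intro a h b hb
    rcases List.chain_cons.mp h with ⟨hac, hct⟩
    rcases List.mem_cons.mp hb with rfl | hb
    · exact Relation.TransGen.single hac
    · exact (ih hct b hb).head hac

lemma chain'_nodup {r : ℕ → ℕ → Prop} (hirr : ∀ v, ¬ Relation.TransGen r v v) :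
    ∀ {L : List ℕ}, L.Chain' r → L.Nodup := by
  intro L
  induction L with
  | nil => simp
  | cons a t ih =>
    intro h
    have h' : List.Chain r a t := h
    refine List.nodup_cons.mpr ⟨?_, ?_⟩
    · intro hmem
      exact hirr a (chain_transGen h' a hmem)
    · refine ih ?_
      cases t with
      | nil => exact List.isChain_nil
      | cons b t' => exact (List.chain_cons.mp h').2

lemma chain'_reflTransGen_getLast {r : ℕ → ℕ → Prop} :
    ∀ {L : List ℕ} {x y : ℕ}, List.Chain' r (x :: L) → (x :: L).getLast? = some y →
      Relation.ReflTransGen r x y := by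
  intro L
  induction L with
  | nil =>
    intro x y _ hy
    have : x = y := by simpa using hy
    exact this ▸ Relation.ReflTransGen.refl
  | cons b t ih =>
    intro x y hch hy
    rcases List.isChain_cons_cons.mp hch with ⟨hxb, hch'⟩
    rw [List.getLast?_cons_cons] at hy
    exact (ih hch' hy).head hxb

lemma mem_path_reflTransGen {r : ℕ → ℕ → Prop} {L : List ℕ} {x y : ℕ} (hch : L.Chain' r)
    (hy : L.getLast? = some y) (hx : x ∈ L) : Relation.ReflTransGen r x y := by
  obtain ⟨s', t, rfl⟩ := List.append_of_mem hx
  have h2 : (x :: t).Chain' r := (List.isChain_append.mp hch).2.1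
  have hl : (x :: t).getLast? = some y := by
    rwa [List.getLast?_append_cons] at hy
  exact chain'_reflTransGen_getLast h2 hl

lemma split_first {p : ℕ → Prop} [DecidablePred p] :
    ∀ {L : List ℕ}, (∃ x ∈ L, p x) →
      ∃ l₁ w l₂, L = l₁ ++ w :: l₂ ∧ p w ∧ ∀ x ∈ l₁, ¬ p x := by
  intro L
  induction L with
  | nil => simp
  | cons a t ih =>
    intro h
    by_cases hpa : p a
    · exact ⟨[], a, t, rfl, hpa, by simp⟩
    · have hex : ∃ x ∈ t, p x := by
        rcases h with ⟨x, hx, hpx⟩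
        rcases List.mem_cons.mp hx with rfl | hx
        · exact absurd hpx hpa
        · exact ⟨x, hx, hpx⟩
      obtain ⟨l₁, w, l₂, rfl, hw, hl₁⟩ := ih hex
      refine ⟨a :: l₁, w, l₂, rfl, hw, ?_⟩
      intro x hx
      rcases List.mem_cons.mp hx with rfl | hx
      · exact hpa
      · exact hl₁ x hx

end Aux


section NetAux

variable {X : Finset ℕ} {N : RootedNet}

lemma mem_underlying {a b : ℕ} :
    s(a, b) ∈ N.underlying ↔ (a, b) ∈ N.edges ∨ (b, a) ∈ N.edges := by
  unfold RootedNet.underlying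
  rw [Multiset.mem_map]
  constructor
  · rintro ⟨e, he, hee⟩
    rcases Sym2.eq_iff.mp hee with ⟨h1, h2⟩ | ⟨h1, h2⟩
    · left; rwa [show (a, b) = (e.1, e.2) by rw [h1, h2], Prod.mk.eta]
    · right; rwa [show (b, a) = (e.1, e.2) by rw [h1, h2], Prod.mk.eta]
  · rintro (h | h)
    · exact ⟨(a, b), h, rfl⟩
    · exact ⟨(b, a), h, Sym2.eq_swap.symm⟩

lemma classify (hN : N.IsPhylo X) {v : ℕ} (hv : v ∈ N.verts) :
    (N.inDeg v = 0 ∧ N.outDeg v = 1) ∨ (N.inDeg v = 1 ∧ N.outDeg v = 0) ∨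
    (N.inDeg v = 1 ∧ N.outDeg v = 2) ∨ (N.inDeg v = 2 ∧ N.outDeg v = 1) := by
  obtain ⟨h1, h2, h3, h4, h5, h6, h7, h8, h9, h10⟩ := hN
  by_cases hvr : v = N.root
  · subst hvr; exact Or.inl ⟨h6, h7⟩
  by_cases hout : N.outDeg v = 0
  · exact Or.inr (Or.inl ⟨h9 v hv hout, hout⟩)
  rcases h10 v hv hvr hout with h | h
  · exact Or.inr (Or.inr (Or.inl h))
  · exact Or.inr (Or.inr (Or.inr h))

lemma exists_inedge {v : ℕ} (h : 0 < N.inDeg v) : ∃ u, (u, v) ∈ N.edges := by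
  obtain ⟨e, he⟩ := Multiset.card_pos_iff_exists_mem.mp h
  obtain ⟨he1, he2⟩ := Multiset.mem_filter.mp he
  exact ⟨e.1, by rwa [show (e.1, v) = e by rw [← he2, Prod.mk.eta]]⟩

lemma exists_outedge {v : ℕ} (h : 0 < N.outDeg v) : ∃ u, (v, u) ∈ N.edges := by
  obtain ⟨e, he⟩ := Multiset.card_pos_iff_exists_mem.mp h
  obtain ⟨he1, he2⟩ := Multiset.mem_filter.mp he
  exact ⟨e.2, by rwa [show (v, e.2) = e by rw [← he2, Prod.mk.eta]]⟩

lemma indeg_pos (hN : N.IsPhylo X) {v : ℕ} (hv : v ∈ N.verts) (hne : v ≠ N.root) :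
    0 < N.inDeg v := by
  obtain ⟨h1, h2, h3, h4, h5, h6, h7, h8, h9, h10⟩ := hN
  by_cases hout : N.outDeg v = 0
  · rw [h9 v hv hout]; omega
  · rcases h10 v hv hne hout with ⟨h, _⟩ | ⟨h, _⟩ <;> omega

lemma reach_root (hN : N.IsPhylo X) : ∀ v ∈ N.verts,
    Relation.ReflTransGen (fun a b => (a, b) ∈ N.edges) N.root v := by
  classical
  have hends := hN.2.2.1
  have hacyc := hN.2.2.2.1
  have key : ∀ n : ℕ, ∀ v ∈ N.verts,
      (N.verts.filter
          (fun u => Relation.TransGen (fun a b => (a, b) ∈ N.edges) u v)).card ≤ n →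
      Relation.ReflTransGen (fun a b => (a, b) ∈ N.edges) N.root v := by
    intro n
    induction n with
    | zero =>
      intro v hv hcard
      by_cases hvr : v = N.root
      · exact hvr ▸ Relation.ReflTransGen.refl
      obtain ⟨u, hu⟩ := exists_inedge (indeg_pos hN hv hvr)
      exfalso
      have huv : u ∈ N.verts := (hends _ hu).1
      have : u ∈ N.verts.filter
          (fun u => Relation.TransGen (fun a b => (a, b) ∈ N.edges) u v) :=
        Finset.mem_filter.mpr ⟨huv, Relation.TransGen.single hu⟩
      have := Finset.card_pos.mpr ⟨u, this⟩
      omega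
    | succ m ih =>
      intro v hv hcard
      by_cases hvr : v = N.root
      · exact hvr ▸ Relation.ReflTransGen.refl
      obtain ⟨u, hu⟩ := exists_inedge (indeg_pos hN hv hvr)
      have huv : u ∈ N.verts := (hends _ hu).1
      have hss : N.verts.filter
            (fun w => Relation.TransGen (fun a b => (a, b) ∈ N.edges) w u) ⊂
          N.verts.filter
            (fun w => Relation.TransGen (fun a b => (a, b) ∈ N.edges) w v) := by
        refine Finset.ssubset_iff_of_subset ?_ |>.mpr ?_
        · intro x hx
          obtain ⟨hx1, hx2⟩ := Finset.mem_filter.mp hx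
          exact Finset.mem_filter.mpr ⟨hx1, hx2.tail hu⟩
        · refine ⟨u, Finset.mem_filter.mpr ⟨huv, Relation.TransGen.single hu⟩, ?_⟩
          intro hmem
          exact hacyc u (Finset.mem_filter.mp hmem).2
      have hlt := Finset.card_lt_card hss
      exact (ih u huv (by omega)).tail hu
  intro v hv
  exact key _ v hv le_rfl

lemma exists_path (hN : N.IsPhylo X) {v : ℕ} (hv : v ∈ N.verts) :
    ∃ L : List ℕ, L.Chain' (fun a b => (a, b) ∈ N.edges) ∧ L.head? = some N.root ∧
      L.getLast? = some v := by
  have h := reach_root hN v hv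
  clear hv
  induction h with
  | refl => exact ⟨[N.root], List.isChain_singleton _, rfl, rfl⟩
  | @tail b c hab hbc ih =>
    obtain ⟨L, hch, hh, hlst⟩ := ih
    cases L with
    | nil => simp at hh
    | cons a t =>
      refine ⟨a :: t ++ [c], ?_, by simpa using hh, by rw [show a :: t ++ [c] = (a :: t) ++ [c] from rfl, List.getLast?_concat]⟩
      refine List.isChain_append.mpr ⟨hch, List.isChain_singleton _, ?_⟩
      intro x hx y hy
      simp only [List.head?_cons, Option.mem_def, Option.some.injEq] at hy
      rw [hlst] at hx
      simp only [Option.mem_def, Option.some.injEq] at hx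
      subst hx; subst hy
      exact hbc

lemma no_parallel (hacyc : ∀ v, ¬ Relation.TransGen (fun a b => (a, b) ∈ N.edges) v v)
    (h3 : ∀ c : List ℕ, IsCycleIn N.underlying c → c.length = 3)
    {x m : ℕ} (h2 : 2 ≤ Multiset.count (x, m) N.edges) : False := by
  classical
  have hmem : (x, m) ∈ N.edges := Multiset.count_pos.mp (by omega)
  have hxm : x ≠ m := by rintro rfl; exact hacyc x (Relation.TransGen.single hmem)
  have hcnt : 2 ≤ Multiset.count s(x, m) N.underlying := by
    unfold RootedNet.underlying
    rw [Multiset.count_map]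
    calc 2 ≤ Multiset.count (x, m) N.edges := h2
    _ = Multiset.card (N.edges.filter (fun e => e = (x, m))) := by
        rw [Multiset.count_eq_card_filter_eq]
        congr 1
        ext e
        simp [eq_comm]
    _ ≤ Multiset.card (N.edges.filter (fun e => s(x, m) = s(e.1, e.2))) := by
        apply Multiset.card_le_card
        apply Multiset.monotone_filter_right
        rintro e rfl
        rfl
  have hle : cycleEdges [x, m] ≤ N.underlying := by
    rw [cycleEdges_pair, show s(m, x) = s(x, m) from Sym2.eq_swap,
      show (↑[s(x, m), s(x, m)] : Multiset (Sym2 ℕ)) = Multiset.replicate 2 s(x, m) from rfl]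
    exact Multiset.le_count_iff_replicate_le.mp hcnt
  have := h3 [x, m] ⟨by simp, by simp [hxm], hle⟩
  simp at this

lemma ret_inedges (hacyc : ∀ v, ¬ Relation.TransGen (fun a b => (a, b) ∈ N.edges) v v)
    (h3 : ∀ c : List ℕ, IsCycleIn N.underlying c → c.length = 3)
    {v : ℕ} (hv : N.inDeg v = 2) :
    ∃ a b, a ≠ b ∧ (a, v) ∈ N.edges ∧ (b, v) ∈ N.edges := by
  classical
  obtain ⟨e, f, hef⟩ := Multiset.card_eq_two.mp hv
  have he : e ∈ N.edges.filter (fun e => e.2 = v) := by rw [hef]; simp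
  have hf : f ∈ N.edges.filter (fun e => e.2 = v) := by rw [hef]; simp
  obtain ⟨he1, he2⟩ := Multiset.mem_filter.mp he
  obtain ⟨hf1, hf2⟩ := Multiset.mem_filter.mp hf
  by_cases hab : e.1 = f.1
  · exfalso
    have hef' : e = f := by
      rcases e with ⟨e1, e2⟩; rcases f with ⟨f1, f2⟩
      simp_all
    have : Multiset.count e (N.edges.filter (fun e => e.2 = v)) = 2 := by
      rw [hef, ← hef']; simp
    rw [Multiset.count_filter_of_pos (p := fun q => q.2 = v) (a := e) (s := N.edges) he2] at this
    refine no_parallel hacyc h3 (x := e.1) (m := v) ?_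
    rw [show (e.1, v) = e by rw [← he2, Prod.mk.eta]]
    omega
  · refine ⟨e.1, f.1, hab, ?_, ?_⟩
    · rwa [show (e.1, v) = e by rw [← he2, Prod.mk.eta]]
    · rwa [show (f.1, v) = f by rw [← hf2, Prod.mk.eta]]

end NetAux


section RetCycle

variable {X : Finset ℕ} {N : RootedNet}

lemma ret_cycle (hN : N.IsPhylo X)
    (h3 : ∀ c : List ℕ, IsCycleIn N.underlying c → c.length = 3)
    {v a b : ℕ} (ha : (a, v) ∈ N.edges) (hb : (b, v) ∈ N.edges) (hab : a ≠ b) :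
    ∃ c, IsCycleIn N.underlying c ∧ v ∈ c ∧
      s(a, v) ∈ cycleEdges c ∧ s(b, v) ∈ cycleEdges c := by
  classical
  have hends := hN.2.2.1
  have hacyc := hN.2.2.2.1
  have hav : a ∈ N.verts := (hends _ ha).1
  have hbv : b ∈ N.verts := (hends _ hb).1
  obtain ⟨P, hPch, hPh, hPl⟩ := exists_path hN hav
  obtain ⟨Q, hQch, hQh, hQl⟩ := exists_path hN hbv
  have hPnd : P.Nodup := chain'_nodup hacyc hPch
  have hQnd : Q.Nodup := chain'_nodup hacyc hQch
  have hvP : v ∉ P := fun hvP =>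
    hacyc v (Relation.TransGen.tail' (mem_path_reflTransGen hPch hPl hvP) ha)
  have hvQ : v ∉ Q := fun hvQ =>
    hacyc v (Relation.TransGen.tail' (mem_path_reflTransGen hQch hQl hvQ) hb)
  have hrootP : N.root ∈ P := by
    cases P with
    | nil => simp at hPh
    | cons p t =>
      simp only [List.head?_cons, Option.some.injEq] at hPh
      exact hPh ▸ List.mem_cons_self
  have hrootQ : N.root ∈ Q := by
    cases Q with
    | nil => simp at hQh
    | cons p t =>
      simp only [List.head?_cons, Option.some.injEq] at hQh
      exact hQh ▸ List.mem_cons_self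
  obtain ⟨l₁, w, l₂, hsplit, hwQ, hl₁⟩ :=
    split_first (p := fun x => x ∈ Q) (L := P.reverse)
      ⟨N.root, List.mem_reverse.mpr hrootP, hrootQ⟩
  obtain ⟨Q₁, Q₂, hQsplit⟩ := List.append_of_mem hwQ
  set r' : ℕ → ℕ → Prop := fun x y => s(x, y) ∈ N.underlying with hr'
  have hPrev : P.reverse.Chain' r' := by
    refine List.isChain_reverse.mpr ?_
    exact hPch.imp (fun x y hxy => mem_underlying.mpr (Or.inr hxy))
  have hQr' : Q.Chain' r' :=
    hQch.imp (fun x y hxy => mem_underlying.mpr (Or.inl hxy))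
  have hPrevSplit : (l₁ ++ w :: l₂).Chain' r' := by rw [← hsplit]; exact hPrev
  obtain ⟨hl₁ch, hwl₂ch, hlink⟩ := List.isChain_append.mp hPrevSplit
  have hQ2ch : (w :: Q₂).Chain' r' := (List.isChain_append.mp (hQsplit ▸ hQr')).2.1
  set M : List ℕ := l₁ ++ w :: Q₂ with hM
  have hMne : M ≠ [] := by simp [hM]
  have hMch : M.Chain' r' := by
    refine List.isChain_append.mpr ⟨hl₁ch, hQ2ch, ?_⟩
    intro x hx y hy
    simp only [List.head?_cons, Option.mem_def, Option.some.injEq] at hy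
    subst hy
    exact hlink x hx w (by simp)
  have hPrevH : P.reverse.head? = some a := by rw [List.head?_reverse, hPl]
  have hMhead : M.head? = some a := by
    cases hl : l₁ with
    | nil =>
      rw [hsplit, hl] at hPrevH
      rw [hM, hl]
      simpa using hPrevH
    | cons x t =>
      rw [hsplit, hl] at hPrevH
      rw [hM, hl]
      simpa using hPrevH
  have hQlast : (w :: Q₂).getLast? = some b := by
    rw [hQsplit, List.getLast?_append_cons] at hQl; exact hQl
  have hMlast : M.getLast? = some b := by
    rw [hM, List.getLast?_append_cons]; exact hQlast
  have hPrevNd : (l₁ ++ w :: l₂).Nodup := by rw [← hsplit]; exact List.nodup_reverse.mpr hPnd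
  have hQndSplit : (Q₁ ++ w :: Q₂).Nodup := hQsplit ▸ hQnd
  obtain ⟨hl₁nd, hwl₂nd, hdis⟩ := List.nodup_append.mp hPrevNd
  obtain ⟨hQ₁nd, hwQ₂nd, hdisQ⟩ := List.nodup_append.mp hQndSplit
  have hMnd : M.Nodup := by
    refine List.nodup_append.mpr ⟨hl₁nd, hwQ₂nd, ?_⟩
    intro x hx y hx' hxy
    subst hxy
    have hxQ : x ∈ Q := by
      rw [hQsplit]
      rcases List.mem_cons.mp hx' with rfl | h
      · exact List.mem_append_right _ List.mem_cons_self
      · exact List.mem_append_right _ (List.mem_cons_of_mem _ h)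
    exact hl₁ x hx hxQ
  have hvM : v ∉ M := by
    intro hvM
    rcases List.mem_append.mp hvM with h | h
    · refine hvP ?_
      have : v ∈ P.reverse := by rw [hsplit]; exact List.mem_append_left _ h
      exact List.mem_reverse.mp this
    · apply hvQ
      rw [hQsplit]
      exact List.mem_append_right _ h
  have hMlen : 2 ≤ M.length := by
    by_contra hlt
    push_neg at hlt
    have hlen : M.length = l₁.length + (Q₂.length + 1) := by simp [hM]
    have h01 : l₁.length = 0 := by omega
    have h02 : Q₂.length = 0 := by omega
    have hl1 : l₁ = [] := List.length_eq_zero_iff.mp h01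
    have hq2 : Q₂ = [] := List.length_eq_zero_iff.mp h02
    rw [hM, hl1, hq2] at hMhead hMlast
    simp at hMhead hMlast
    exact hab (hMhead ▸ hMlast.symm ▸ rfl)
  have hhead : M.head hMne = a := by
    have h := List.head?_eq_head (l := M) hMne
    rw [h] at hMhead
    exact Option.some.inj hMhead
  have hlast : M.getLast hMne = b := by
    have h := List.getLast?_eq_getLast (l := M) hMne
    rw [h] at hMlast
    exact Option.some.inj hMlast
  obtain ⟨hcyc, hm1, hm2⟩ := isCycleIn_cons (E := N.underlying) v M hMne hMlen hMnd hvM hMch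
    (by rw [hhead]; exact mem_underlying.mpr (Or.inr ha))
    (by rw [hlast]; exact mem_underlying.mpr (Or.inl hb))
  refine ⟨v :: M, hcyc, List.mem_cons_self, ?_, ?_⟩
  · rw [show s(a, v) = s(v, M.head hMne) by rw [hhead, Sym2.eq_swap]]
    exact hm1
  · rw [show s(b, v) = s(M.getLast hMne, v) by rw [hlast]]
    exact hm2

end RetCycle


section Struct

variable {X : Finset ℕ} {N : RootedNet}

lemma two_le_card {α : Type*} [DecidableEq α] {s : Multiset α} {x y : α} (hxy : x ≠ y)
    (hx : x ∈ s) (hy : y ∈ s) : 2 ≤ Multiset.card s := by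
  have hy' : y ∈ s.erase x := (Multiset.mem_erase_of_ne hxy.symm).mpr hy
  have h1 : 0 < Multiset.card (s.erase x) := Multiset.card_pos_iff_exists_mem.mpr ⟨y, hy'⟩
  have h2 : Multiset.card (s.erase x) = Multiset.card s - 1 := by
    rw [Multiset.card_erase_of_mem hx, Nat.pred_eq_sub_one]
  omega

lemma sink_ret (hN : N.IsPhylo X) {p q z : ℕ} (hpq : p ≠ q)
    (hp : (p, z) ∈ N.edges) (hq : (q, z) ∈ N.edges) :
    z ∈ N.verts ∧ N.inDeg z = 2 ∧ N.outDeg z = 1 := by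
  classical
  have hzv : z ∈ N.verts := (hN.2.2.1 _ hp).2
  have h2 : 2 ≤ N.inDeg z := by
    refine two_le_card (x := (p, z)) (y := (q, z)) (by simp [hpq]) ?_ ?_ <;>
      · rw [Multiset.mem_filter]; exact ⟨‹_›, rfl⟩
  rcases classify hN hzv with ⟨ha, hb⟩ | ⟨ha, hb⟩ | ⟨ha, hb⟩ | ⟨ha, hb⟩
  · omega
  · omega
  · omega
  · exact ⟨hzv, ha, hb⟩

lemma source_tree (hN : N.IsPhylo X) {q y z : ℕ} (hyz : y ≠ z)
    (h1 : (q, y) ∈ N.edges) (h2 : (q, z) ∈ N.edges) :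
    q ∈ N.verts ∧ N.inDeg q = 1 ∧ N.outDeg q = 2 := by
  classical
  have hqv : q ∈ N.verts := (hN.2.2.1 _ h1).1
  have h2' : 2 ≤ N.outDeg q := by
    refine two_le_card (x := (q, y)) (y := (q, z)) (by simp [hyz]) ?_ ?_ <;>
      · rw [Multiset.mem_filter]; exact ⟨‹_›, rfl⟩
  rcases classify hN hqv with ⟨ha, hb⟩ | ⟨ha, hb⟩ | ⟨ha, hb⟩ | ⟨ha, hb⟩
  · omega
  · omega
  · exact ⟨hqv, ha, hb⟩
  · omega

lemma mid_tree (hN : N.IsPhylo X) (hl : Level1 N.underlying)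
    (h3 : ∀ c : List ℕ, IsCycleIn N.underlying c → c.length = 3)
    {x m z : ℕ} {c : List ℕ} (hc : IsCycleIn N.underlying c) (hmc : m ∈ c)
    (hxm : (x, m) ∈ N.edges) (hmz : (m, z) ∈ N.edges)
    (honly : ∀ d, s(d, m) ∈ cycleEdges c → d = x ∨ d = z) :
    m ∈ N.verts ∧ N.inDeg m = 1 ∧ N.outDeg m = 2 := by
  classical
  have hacyc := hN.2.2.2.1
  have hmv : m ∈ N.verts := (hN.2.2.1 _ hxm).2
  have hin1 : 0 < N.inDeg m :=
    Multiset.card_pos_iff_exists_mem.mpr ⟨(x, m), Multiset.mem_filter.mpr ⟨hxm, rfl⟩⟩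
  have hout1 : 0 < N.outDeg m :=
    Multiset.card_pos_iff_exists_mem.mpr ⟨(m, z), Multiset.mem_filter.mpr ⟨hmz, rfl⟩⟩
  rcases classify hN hmv with ⟨ha, hb⟩ | ⟨ha, hb⟩ | ⟨ha, hb⟩ | ⟨ha, hb⟩
  · omega
  · omega
  · exact ⟨hmv, ha, hb⟩
  exfalso
  obtain ⟨a, b, hab, haE, hbE⟩ := ret_inedges hacyc h3 ha
  have hsecond : ∃ d, d ≠ x ∧ (d, m) ∈ N.edges := by
    by_cases hax : a = x
    · exact ⟨b, fun hbx => hab (by rw [hax, hbx]), hbE⟩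
    · exact ⟨a, hax, haE⟩
  obtain ⟨d, hdx, hdE⟩ := hsecond
  have hdz : d ≠ z := fun h =>
    hacyc m ((Relation.TransGen.single hmz).tail (h ▸ hdE))
  obtain ⟨c', hc', hmc', hxe', hde'⟩ := ret_cycle hN h3 hxm hdE (fun h => hdx h.symm)
  by_cases hEq : cycleEdges c = cycleEdges c'
  · rcases honly d (hEq ▸ hde') with h | h
    · exact hdx h
    · exact hdz h
  · exact hl.2 c c' hc hc' hEq m hmc hmc'

lemma cycle_struct (hN : N.IsPhylo X) (hl : Level1 N.underlying)
    (h3 : ∀ c : List ℕ, IsCycleIn N.underlying c → c.length = 3)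
    {c : List ℕ} (hc : IsCycleIn N.underlying c) :
    ∃ rt w₁ w₂ : ℕ, (∀ x, x ∈ c ↔ x = rt ∨ x = w₁ ∨ x = w₂) ∧
      rt ≠ w₁ ∧ rt ≠ w₂ ∧ w₁ ≠ w₂ ∧
      rt ∈ N.verts ∧ N.inDeg rt = 2 ∧
      w₁ ∈ N.verts ∧ N.inDeg w₁ = 1 ∧ N.outDeg w₁ = 2 ∧
      w₂ ∈ N.verts ∧ N.inDeg w₂ = 1 ∧ N.outDeg w₂ = 2 := by
  classical
  have hacyc := hN.2.2.2.1
  obtain ⟨a₁, a₂, a₃, rfl⟩ := List.length_eq_three.mp (h3 c hc)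
  have hnd := hc.2.1
  have h12 : a₁ ≠ a₂ := by simp at hnd; tauto
  have h13 : a₁ ≠ a₃ := by simp at hnd; tauto
  have h23 : a₂ ≠ a₃ := by simp at hnd; tauto
  have hce := cycleEdges_triple a₁ a₂ a₃
  have hle := hc.2.2
  have hm12 : s(a₁, a₂) ∈ N.underlying := Multiset.mem_of_le hle (by rw [hce]; simp)
  have hm23 : s(a₂, a₃) ∈ N.underlying := Multiset.mem_of_le hle (by rw [hce]; simp)
  have hm31 : s(a₃, a₁) ∈ N.underlying := Multiset.mem_of_le hle (by rw [hce]; simp)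
  have honlyAux : ∀ m d : ℕ, s(d, m) ∈ cycleEdges [a₁, a₂, a₃] →
      (d = a₁ ∧ m = a₂) ∨ (d = a₂ ∧ m = a₁) ∨ (d = a₂ ∧ m = a₃) ∨ (d = a₃ ∧ m = a₂) ∨
      (d = a₃ ∧ m = a₁) ∨ (d = a₁ ∧ m = a₃) := by
    intro m d hd
    rw [hce] at hd
    simp only [Multiset.mem_coe, List.mem_cons, List.not_mem_nil, or_false] at hd
    rcases hd with h | h | h <;> rcases Sym2.eq_iff.mp h with ⟨hA, hB⟩ | ⟨hA, hB⟩ <;> tauto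
  rcases mem_underlying.mp hm12 with e12 | e21 <;>
    rcases mem_underlying.mp hm23 with e23 | e32 <;>
      rcases mem_underlying.mp hm31 with e31 | e13
  · exact absurd (((Relation.TransGen.single e12).tail e23).tail e31) (hacyc a₁)
  · -- q=a₁, m=a₂, z=a₃
    obtain ⟨hmv, hm1, hm2⟩ := mid_tree hN hl h3 hc (by simp) e12 e23
      (fun d hd => by rcases honlyAux a₂ d hd with h|h|h|h|h|h <;> omega)
    obtain ⟨hqv, hq1, hq2⟩ := source_tree hN h23 e12 e13
    obtain ⟨hzv, hz1, hz2⟩ := sink_ret hN h12.symm e23 e13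
    exact ⟨a₃, a₁, a₂, by intro x; simp only [List.mem_cons, List.not_mem_nil, or_false]; try tauto,
      h13.symm, h23.symm, h12, hzv, hz1, hqv, hq1, hq2, hmv, hm1, hm2⟩
  · -- q=a₃, m=a₁, z=a₂
    obtain ⟨hmv, hm1, hm2⟩ := mid_tree hN hl h3 hc (by simp) e31 e12
      (fun d hd => by rcases honlyAux a₁ d hd with h|h|h|h|h|h <;> omega)
    obtain ⟨hqv, hq1, hq2⟩ := source_tree hN (fun h => h12 h.symm) e32 e31
    obtain ⟨hzv, hz1, hz2⟩ := sink_ret hN h13 e12 e32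
    exact ⟨a₂, a₃, a₁, by intro x; simp only [List.mem_cons, List.not_mem_nil, or_false]; try tauto,
      h23, h12.symm, h13.symm, hzv, hz1, hqv, hq1, hq2, hmv, hm1, hm2⟩
  · -- q=a₁, m=a₃, z=a₂
    obtain ⟨hmv, hm1, hm2⟩ := mid_tree hN hl h3 hc (by simp) e13 e32
      (fun d hd => by rcases honlyAux a₃ d hd with h|h|h|h|h|h <;> omega)
    obtain ⟨hqv, hq1, hq2⟩ := source_tree hN h23 e12 e13
    obtain ⟨hzv, hz1, hz2⟩ := sink_ret hN h13 e12 e32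
    exact ⟨a₂, a₁, a₃, by intro x; simp only [List.mem_cons, List.not_mem_nil, or_false]; try tauto,
      h12.symm, h23, h13, hzv, hz1, hqv, hq1, hq2, hmv, hm1, hm2⟩
  · -- q=a₂, m=a₃, z=a₁
    obtain ⟨hmv, hm1, hm2⟩ := mid_tree hN hl h3 hc (by simp) e23 e31
      (fun d hd => by rcases honlyAux a₃ d hd with h|h|h|h|h|h <;> omega)
    obtain ⟨hqv, hq1, hq2⟩ := source_tree hN h13 e21 e23
    obtain ⟨hzv, hz1, hz2⟩ := sink_ret hN h23 e21 e31
    exact ⟨a₁, a₂, a₃, by intro x; simp only [List.mem_cons, List.not_mem_nil, or_false]; try tauto,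
      h12, h13, h23, hzv, hz1, hqv, hq1, hq2, hmv, hm1, hm2⟩
  · -- q=a₂, m=a₁, z=a₃
    obtain ⟨hmv, hm1, hm2⟩ := mid_tree hN hl h3 hc (by simp) e21 e13
      (fun d hd => by rcases honlyAux a₁ d hd with h|h|h|h|h|h <;> omega)
    obtain ⟨hqv, hq1, hq2⟩ := source_tree hN h13 e21 e23
    obtain ⟨hzv, hz1, hz2⟩ := sink_ret hN h12.symm e23 e13
    exact ⟨a₃, a₂, a₁, by intro x; simp only [List.mem_cons, List.not_mem_nil, or_false]; try tauto,
      h23.symm, h13.symm, h12.symm, hzv, hz1, hqv, hq1, hq2, hmv, hm1, hm2⟩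
  · -- q=a₃, m=a₂, z=a₁
    obtain ⟨hmv, hm1, hm2⟩ := mid_tree hN hl h3 hc (by simp) e32 e21
      (fun d hd => by rcases honlyAux a₂ d hd with h|h|h|h|h|h <;> omega)
    obtain ⟨hqv, hq1, hq2⟩ := source_tree hN (fun h => h12 h.symm) e32 e31
    obtain ⟨hzv, hz1, hz2⟩ := sink_ret hN h23 e21 e31
    exact ⟨a₁, a₃, a₂, by intro x; simp only [List.mem_cons, List.not_mem_nil, or_false]; try tauto,
      h13, h12, h23.symm, hzv, hz1, hqv, hq1, hq2, hmv, hm1, hm2⟩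
  · exact absurd (((Relation.TransGen.single e13).tail e32).tail e21) (hacyc a₁)

lemma ret_on_cycle (hN : N.IsPhylo X)
    (h3 : ∀ c : List ℕ, IsCycleIn N.underlying c → c.length = 3)
    {v : ℕ} (h2 : N.inDeg v = 2) :
    ∃ c, IsCycleIn N.underlying c ∧ v ∈ c := by
  obtain ⟨a, b, hab, ha, hb⟩ := ret_inedges hN.2.2.2.1 h3 h2
  obtain ⟨c, hc, hv, -, -⟩ := ret_cycle hN h3 ha hb hab
  exact ⟨c, hc, hv⟩

lemma mem_of_cycleEdges_eq
    (h3 : ∀ c : List ℕ, IsCycleIn N.underlying c → c.length = 3)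
    {c₁ c₂ : List ℕ} (hc₁ : IsCycleIn N.underlying c₁) (hc₂ : IsCycleIn N.underlying c₂)
    (he : cycleEdges c₁ = cycleEdges c₂) {y : ℕ} (hy : y ∈ c₂) : y ∈ c₁ := by
  obtain ⟨a, b, d, rfl⟩ := List.length_eq_three.mp (h3 c₁ hc₁)
  obtain ⟨a', b', d', rfl⟩ := List.length_eq_three.mp (h3 c₂ hc₂)
  rw [cycleEdges_triple, cycleEdges_triple] at he
  have key : ∀ u v : ℕ, s(u, v) ∈ (↑[s(a, b), s(b, d), s(d, a)] : Multiset (Sym2 ℕ)) →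
      u ∈ [a, b, d] := by
    intro u v hu
    simp only [Multiset.mem_coe, List.mem_cons, List.not_mem_nil, or_false] at hu
    rcases hu with h | h | h <;> rcases Sym2.eq_iff.mp h with ⟨hA, hB⟩ | ⟨hA, hB⟩ <;> simp [hA]
  rcases (by simpa using hy : y = a' ∨ y = b' ∨ y = d') with rfl | rfl | rfl
  · exact key y b' (by rw [he]; simp)
  · exact key y d' (by rw [he]; simp)
  · exact key y a' (by rw [he]; simp)

end Struct


section Count

variable {X : Finset ℕ} {N : RootedNet}

lemma sum_filter_card {V : Finset ℕ} {s : Multiset (ℕ × ℕ)} (f : ℕ × ℕ → ℕ)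
    (h : ∀ e ∈ s, f e ∈ V) :
    ∑ v ∈ V, Multiset.card (s.filter (fun e => f e = v)) = Multiset.card s := by
  classical
  induction s using Multiset.induction with
  | empty => simp
  | cons e s ih =>
    have he : f e ∈ V := h e (Multiset.mem_cons_self _ _)
    have ih' := ih (fun e' he' => h e' (Multiset.mem_cons_of_mem he'))
    have hstep : ∀ v ∈ V, Multiset.card ((e ::ₘ s).filter (fun e => f e = v)) =
        (if f e = v then 1 else 0) + Multiset.card (s.filter (fun e => f e = v)) := by
      intro v _
      rw [Multiset.filter_cons, Multiset.card_add]
      congr 1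
      split <;> simp
    rw [Finset.sum_congr rfl hstep, Finset.sum_add_distrib, ih', Multiset.card_cons]
    have : (∑ v ∈ V, if f e = v then 1 else 0) = 1 := by
      rw [Finset.sum_ite_eq V (f e) (fun _ => 1)]
      simp [he]
    omega

lemma card_edges_out (hN : N.IsPhylo X) :
    ∑ v ∈ N.verts, N.outDeg v = Multiset.card N.edges :=
  sum_filter_card (fun e => e.1) (fun e he => (hN.2.2.1 e he).1)

lemma card_edges_in (hN : N.IsPhylo X) :
    ∑ v ∈ N.verts, N.inDeg v = Multiset.card N.edges :=
  sum_filter_card (fun e => e.2) (fun e he => (hN.2.2.1 e he).2)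

lemma count_eq (hN : N.IsPhylo X) :
    (N.verts.filter (fun v => N.inDeg v = 1 ∧ N.outDeg v = 2)).card + 1 =
      X.card + (N.verts.filter (fun v => N.inDeg v = 2)).card := by
  classical
  have h2 := hN.2.1
  have h5 := hN.2.2.2.2.1
  have h6 := hN.2.2.2.2.2.1
  have h7 := hN.2.2.2.2.2.2.1
  have h8 := hN.2.2.2.2.2.2.2.1
  have h9 := hN.2.2.2.2.2.2.2.2.1
  set T := N.verts.filter (fun v => N.inDeg v = 1 ∧ N.outDeg v = 2) with hT
  set R := N.verts.filter (fun v => N.inDeg v = 2) with hR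
  have hXv : ∀ x ∈ X, N.outDeg x = 0 := fun x hx => (h8 x (h2 hx)).mp hx
  have hXin : ∀ x ∈ X, N.inDeg x = 1 := fun x hx => h9 x (h2 hx) (hXv x hx)
  have hRout : ∀ v ∈ R, N.outDeg v = 1 := by
    intro v hv
    obtain ⟨hvv, hv2⟩ := Finset.mem_filter.mp hv
    rcases classify hN hvv with ⟨ha, hb⟩ | ⟨ha, hb⟩ | ⟨ha, hb⟩ | ⟨ha, hb⟩ <;> omega
  have hd0 : Disjoint ({N.root} : Finset ℕ) X := by
    rw [Finset.disjoint_left]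
    intro v hv hvX
    rw [Finset.mem_singleton.mp hv] at hvX
    have := hXv _ hvX
    omega
  have hd1 : Disjoint T R := by
    rw [Finset.disjoint_left]
    intro v hv hv'
    have := (Finset.mem_filter.mp hv).2
    have := (Finset.mem_filter.mp hv').2
    omega
  have hd2 : Disjoint ({N.root} ∪ X) (T ∪ R) := by
    rw [Finset.disjoint_left]
    intro v hv hv'
    have hv1 : N.inDeg v = 0 ∨ N.outDeg v = 0 := by
      rcases Finset.mem_union.mp hv with h | h
      · left; rw [Finset.mem_singleton.mp h]; exact h6
      · right; exact hXv _ h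
    have hv2 : (N.inDeg v = 1 ∧ N.outDeg v = 2) ∨ N.inDeg v = 2 := by
      rcases Finset.mem_union.mp hv' with h | h
      · exact Or.inl (Finset.mem_filter.mp h).2
      · exact Or.inr (Finset.mem_filter.mp h).2
    rcases Finset.mem_union.mp hv with h | h
    · rw [Finset.mem_singleton.mp h] at hv2
      omega
    · have := hXin _ h
      have := hXv _ h
      omega
  have hcover : N.verts = ({N.root} ∪ X) ∪ (T ∪ R) := by
    ext v
    constructor
    · intro hv
      by_cases hvr : v = N.root
      · exact Finset.mem_union.mpr (Or.inl (Finset.mem_union.mpr (Or.inl (by simp [hvr]))))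
      have hpos := indeg_pos hN hv hvr
      rcases classify hN hv with ⟨ha, hb⟩ | ⟨ha, hb⟩ | ⟨ha, hb⟩ | ⟨ha, hb⟩
      · omega
      · refine Finset.mem_union.mpr (Or.inl (Finset.mem_union.mpr (Or.inr ?_)))
        exact (h8 v hv).mpr hb
      · exact Finset.mem_union.mpr
          (Or.inr (Finset.mem_union.mpr (Or.inl (Finset.mem_filter.mpr ⟨hv, ha, hb⟩))))
      · exact Finset.mem_union.mpr
          (Or.inr (Finset.mem_union.mpr (Or.inr (Finset.mem_filter.mpr ⟨hv, ha⟩))))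
    · intro hv
      rcases Finset.mem_union.mp hv with h | h
      · rcases Finset.mem_union.mp h with h | h
        · rw [Finset.mem_singleton.mp h]; exact h5
        · exact h2 h
      · rcases Finset.mem_union.mp h with h | h
        · exact Finset.mem_of_mem_filter v h
        · exact Finset.mem_of_mem_filter v h
  have hsum_out := card_edges_out hN
  have hsum_in := card_edges_in hN
  rw [hcover, Finset.sum_union hd2, Finset.sum_union hd0, Finset.sum_union hd1]
    at hsum_out hsum_in
  have eo1 : ∑ v ∈ ({N.root} : Finset ℕ), N.outDeg v = 1 := by simp [h7]
  have eo2 : ∑ v ∈ X, N.outDeg v = 0 := Finset.sum_eq_zero hXv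
  have eo3 : ∑ v ∈ T, N.outDeg v = T.card * 2 := by
    rw [Finset.sum_congr rfl (fun v hv => (Finset.mem_filter.mp hv).2.2),
      Finset.sum_const, smul_eq_mul]
  have eo4 : ∑ v ∈ R, N.outDeg v = R.card * 1 := by
    rw [Finset.sum_congr rfl hRout, Finset.sum_const, smul_eq_mul]
  have ei1 : ∑ v ∈ ({N.root} : Finset ℕ), N.inDeg v = 0 := by simp [h6]
  have ei2 : ∑ v ∈ X, N.inDeg v = X.card * 1 := by
    rw [Finset.sum_congr rfl hXin, Finset.sum_const, smul_eq_mul]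
  have ei3 : ∑ v ∈ T, N.inDeg v = T.card * 1 := by
    rw [Finset.sum_congr rfl (fun v hv => (Finset.mem_filter.mp hv).2.1),
      Finset.sum_const, smul_eq_mul]
  have ei4 : ∑ v ∈ R, N.inDeg v = R.card * 2 := by
    rw [Finset.sum_congr rfl (fun v hv => (Finset.mem_filter.mp hv).2),
      Finset.sum_const, smul_eq_mul]
  rw [eo1, eo2, eo3, eo4] at hsum_out
  rw [ei1, ei2, ei3, ei4] at hsum_in
  omega

end Count


/-- Let `N` be a rooted level-1 network on `X` all of whose
cycles have length three and with exactly `k` reticulations. Every reticulation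
and tree vertex of `N` lies on a cycle iff `k = |X| - 1`. -/
theorem all_vertices_on_cycles_iff (X : Finset ℕ) (hX : X.Nonempty)
    (N : RootedNet) (k : ℕ) (hN : N.IsPhylo X) (hl : Level1 N.underlying)
    (h3 : ∀ c : List ℕ, IsCycleIn N.underlying c → c.length = 3)
    (hk : N.numRet = k) :
    ((∀ w ∈ N.verts, (N.inDeg w = 2 ∨ (N.inDeg w = 1 ∧ N.outDeg w = 2)) →
        ∃ c : List ℕ, IsCycleIn N.underlying c ∧ w ∈ c) ↔
      k = X.card - 1) := by
  classical
  have hacyc := hN.2.2.2.1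
  set T := N.verts.filter (fun v => N.inDeg v = 1 ∧ N.outDeg v = 2) with hT
  set R := N.verts.filter (fun v => N.inDeg v = 2) with hR
  have hcount : T.card + 1 = X.card + R.card := count_eq hN
  have hkR : R.card = k := hk
  have hn1 : 1 ≤ X.card := Finset.Nonempty.card_pos hX
  have hcycEx : ∀ r, r ∈ R → ∃ c, IsCycleIn N.underlying c ∧ r ∈ c := fun r hr =>
    ret_on_cycle hN h3 (Finset.mem_filter.mp hr).2
  choose! C hC1 hC2 using hcycEx
  have hstr : ∀ r, r ∈ R → ∃ w₁ w₂ : ℕ, w₁ ∈ T ∧ w₂ ∈ T ∧ w₁ ≠ w₂ ∧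
      w₁ ∈ C r ∧ w₂ ∈ C r ∧ ∀ x ∈ C r, x = r ∨ x = w₁ ∨ x = w₂ := by
    intro r hr
    obtain ⟨rt, w₁, w₂, hmem, hne1, hne2, hne3, hrtv, hrt2, hw₁v, hw₁1, hw₁2,
      hw₂v, hw₂1, hw₂2⟩ := cycle_struct hN hl h3 (hC1 r hr)
    have hr2 : N.inDeg r = 2 := (Finset.mem_filter.mp hr).2
    have hrrt : r = rt := by
      rcases (hmem r).mp (hC2 r hr) with h | h | h
      · exact h
      · exfalso; rw [h] at hr2; omega
      · exfalso; rw [h] at hr2; omega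
    subst hrrt
    exact ⟨w₁, w₂, Finset.mem_filter.mpr ⟨hw₁v, hw₁1, hw₁2⟩,
      Finset.mem_filter.mpr ⟨hw₂v, hw₂1, hw₂2⟩, hne3,
      (hmem w₁).mpr (Or.inr (Or.inl rfl)), (hmem w₂).mpr (Or.inr (Or.inr rfl)),
      fun x hx => (hmem x).mp hx⟩
  choose! W₁ W₂ hWT₁ hWT₂ hWne hWC₁ hWC₂ hWall using hstr
  have hshare : ∀ c₁ c₂, IsCycleIn N.underlying c₁ → IsCycleIn N.underlying c₂ →
      ∀ x, x ∈ c₁ → x ∈ c₂ → cycleEdges c₁ = cycleEdges c₂ := by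
    intro c₁ c₂ hc₁ hc₂ x hx₁ hx₂
    by_contra hne
    exact hl.2 c₁ c₂ hc₁ hc₂ hne x hx₁ hx₂
  have hkey : ∀ r ∈ R, ∀ r' ∈ R, ∀ x, x ∈ C r → x ∈ C r' → r = r' := by
    intro r hr r' hr' x hx hx'
    have he := hshare _ _ (hC1 r hr) (hC1 r' hr') x hx hx'
    have hrC : r ∈ C r' :=
      mem_of_cycleEdges_eq h3 (hC1 r' hr') (hC1 r hr) he.symm (hC2 r hr)
    have hr2 : N.inDeg r = 2 := (Finset.mem_filter.mp hr).2
    rcases hWall r' hr' r hrC with h | h | h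
    · exact h
    · exfalso
      have hh := (Finset.mem_filter.mp (hWT₁ r' hr')).2
      rw [h] at hr2; omega
    · exfalso
      have hh := (Finset.mem_filter.mp (hWT₂ r' hr')).2
      rw [h] at hr2; omega
  have hpmemC : ∀ r, r ∈ R → ∀ x ∈ ({W₁ r, W₂ r} : Finset ℕ), x ∈ C r := by
    intro r hr x hx
    rcases Finset.mem_insert.mp hx with rfl | hx
    · exact hWC₁ r hr
    · rw [Finset.mem_singleton.mp hx]; exact hWC₂ r hr
  have hBcard : (R.biUnion (fun r => {W₁ r, W₂ r})).card = 2 * R.card := by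
    rw [Finset.card_biUnion]
    · calc ∑ r ∈ R, ({W₁ r, W₂ r} : Finset ℕ).card = ∑ r ∈ R, 2 :=
          Finset.sum_congr rfl (fun r hr => Finset.card_pair (hWne r hr))
      _ = 2 * R.card := by rw [Finset.sum_const, smul_eq_mul, mul_comm]
    · intro r hr r' hr' hne
      rw [Function.onFun, Finset.disjoint_left]
      intro x hx hx'
      exact hne (hkey r hr r' hr' x (hpmemC r hr x hx) (hpmemC r' hr' x hx'))
  have hBsub : R.biUnion (fun r => {W₁ r, W₂ r}) ⊆ T := by
    intro x hx
    obtain ⟨r, hr, hxr⟩ := Finset.mem_biUnion.mp hx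
    rcases Finset.mem_insert.mp hxr with rfl | hxr
    · exact hWT₁ r hr
    · rw [Finset.mem_singleton.mp hxr]; exact hWT₂ r hr
  have hBle : 2 * R.card ≤ T.card := hBcard ▸ Finset.card_le_card hBsub
  constructor
  · intro hcov
    have hsub : T ⊆ R.biUnion (fun r => {W₁ r, W₂ r}) := by
      intro w hw
      obtain ⟨hwv, hw1, hw2⟩ := Finset.mem_filter.mp hw
      obtain ⟨c, hc, hwc⟩ := hcov w hwv (Or.inr ⟨hw1, hw2⟩)
      obtain ⟨rt, w₁, w₂, hmem, hne1, hne2, hne3, hrtv, hrt2, hrest⟩ :=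
        cycle_struct hN hl h3 hc
      have hrtR : rt ∈ R := Finset.mem_filter.mpr ⟨hrtv, hrt2⟩
      have hrtc : rt ∈ c := (hmem rt).mpr (Or.inl rfl)
      have he := hshare _ _ hc (hC1 rt hrtR) rt hrtc (hC2 rt hrtR)
      have hwC : w ∈ C rt := mem_of_cycleEdges_eq h3 (hC1 rt hrtR) hc he.symm hwc
      rcases hWall rt hrtR w hwC with h | h | h
      · exfalso; rw [h] at hw1; omega
      · exact Finset.mem_biUnion.mpr ⟨rt, hrtR, by rw [h]; exact Finset.mem_insert_self _ _⟩
      · exact Finset.mem_biUnion.mpr ⟨rt, hrtR, by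
          rw [h]; exact Finset.mem_insert_of_mem (Finset.mem_singleton_self _)⟩
    have hTle : T.card ≤ 2 * R.card := hBcard ▸ Finset.card_le_card hsub
    omega
  · intro hkeq w hwv hwdeg
    rcases hwdeg with hdeg2 | ⟨hin, hout⟩
    · exact ret_on_cycle hN h3 hdeg2
    · have hwT : w ∈ T := Finset.mem_filter.mpr ⟨hwv, hin, hout⟩
      have hEq : R.biUnion (fun r => {W₁ r, W₂ r}) = T :=
        Finset.eq_of_subset_of_card_le hBsub (by omega)
      rw [← hEq] at hwT
      obtain ⟨r, hr, hwp⟩ := Finset.mem_biUnion.mp hwT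
      exact ⟨C r, hC1 r hr, hpmemC r hr w hwp⟩

end Phylo
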